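/- Assume the Axiom of Choice. Then for every infinite set S, the quasi-club filter μ_S equals the club filter on [S]^ω, i.e., A ∈ μ_S if and only if A contains a set C ⊆ [S]^ω that is cofinal (for every σ ∈ [S]^ω there is τ ∈ C with σ ⊆ τ) and closed under unions of ⊆-increasing ω-chains. -/

import Mathlib

open Set

universe u

/-- The collection `[S]^ω` of countable subsets of `S`. -/
abbrev Cw (S : Type u) := {σ : Set S // σ.Countable}

/-- Dependent choice for the set `S`. -/
def DCax (S : Type u) : Prop :=
  ∀ R : S → S → Prop, (∀ x, ∃ y, R x y) →
    ∀ x : S, ∃ f : ℕ → S, f 0 = x ∧ ∀ n, R (f n) (f (n + 1))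

/-- `F` is a filter on `[S]^ω`: contains everything, upward closed, closed under
binary intersections. -/
def IsSetFilter (S : Type u) (F : Set (Set (Cw S))) : Prop :=
  Set.univ ∈ F ∧ (∀ A B : Set (Cw S), A ∈ F → A ⊆ B → B ∈ F) ∧
    (∀ A B : Set (Cw S), A ∈ F → B ∈ F → A ∩ B ∈ F)

/-- `F` is fine. -/
def IsFine (S : Type u) (F : Set (Set (Cw S))) : Prop :=
  ∀ τ : Cw S, {σ : Cw S | τ.1 ⊆ σ.1} ∈ F

/-- `F` has the diagonal intersection property. -/
def HasDiagInter (S : Type u) (F : Set (Set (Cw S))) : Prop :=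
  ∀ B : S → Set (Cw S), (∀ a : S, B a ∈ F) →
    {σ : Cw S | ∀ a ∈ σ.1, σ ∈ B a} ∈ F

/-- `F` is normal: every regressive-like assignment on an `F`-positive set is
constant-containing on an `F`-positive set. -/
def IsNormalFilter (S : Type u) (F : Set (Set (Cw S))) : Prop :=
  ∀ A : Set (Cw S), Aᶜ ∉ F →
    ∀ G : Cw S → Cw S, (∀ σ ∈ A, (G σ).1.Nonempty ∧ (G σ).1 ⊆ σ.1) →
      ∃ a : S, {σ : Cw S | σ ∈ A ∧ a ∈ (G σ).1}ᶜ ∉ F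

/-- A supercompactness measure on `[S]^ω`: a (proper) normal fine ultrafilter. -/
def IsSCMeasure (S : Type u) (F : Set (Set (Cw S))) : Prop :=
  IsSetFilter S F ∧ ∅ ∉ F ∧ IsFine S F ∧ HasDiagInter S F ∧
    ∀ A : Set (Cw S), A ∈ F ∨ Aᶜ ∈ F

/-- A quasi-strategy for Player II (who moves at odd-length-so-far positions,
i.e. positions of odd length are II's turn... here: II moves when the current
position has odd length). -/
def IsQStratII (S : Type u) (T : Set (List S)) : Prop :=
  [] ∈ T ∧ (∀ p ∈ T, Even p.length → ∀ a : S, p ++ [a] ∈ T) ∧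
    (∀ p ∈ T, ¬ Even p.length → ∃ b : S, p ++ [b] ∈ T)

/-- A quasi-strategy for Player I. -/
def IsQStratI (S : Type u) (T : Set (List S)) : Prop :=
  [] ∈ T ∧ (∀ p ∈ T, ¬ Even p.length → ∀ b : S, p ++ [b] ∈ T) ∧
    (∀ p ∈ T, Even p.length → ∃ a : S, p ++ [a] ∈ T)

/-- The infinite play `f` is consistent with the tree `T`. -/
def PlayThrough (S : Type u) (T : Set (List S)) (f : ℕ → S) : Prop :=
  ∀ n : ℕ, (List.ofFn fun i : Fin n => f i) ∈ T

/-- The countable set of all elements played in the play `f`. -/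
def playSet (S : Type u) (f : ℕ → S) : Cw S :=
  ⟨Set.range f, Set.countable_range f⟩

/-- `T` is a winning quasi-strategy for Player II in the club game on `S` with payoff `A`. -/
def WinsClubII (S : Type u) (T : Set (List S)) (A : Set (Cw S)) : Prop :=
  IsQStratII S T ∧ ∀ f : ℕ → S, PlayThrough S T f → playSet S f ∈ A

/-- `T` is a winning quasi-strategy for Player I in the club game on `S` with payoff `A`
(for Player II). -/
def WinsClubI (S : Type u) (T : Set (List S)) (A : Set (Cw S)) : Prop :=
  IsQStratI S T ∧ ∀ f : ℕ → S, PlayThrough S T f → playSet S f ∉ A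

/-- The quasi-club filter `μ_S`. -/
def qclub (S : Type u) : Set (Set (Cw S)) :=
  {A | ∃ T : Set (List S), WinsClubII S T A}

/-- Winning quasi-strategy for Player II in the length-ω game on `S` with payoff `A ⊆ S^ω`. -/
def WinsGameQSII (S : Type u) (T : Set (List S)) (A : Set (ℕ → S)) : Prop :=
  IsQStratII S T ∧ ∀ f : ℕ → S, PlayThrough S T f → f ∈ A

/-- Winning quasi-strategy for Player I in the length-ω game on `S` with payoff `A ⊆ S^ω`
(for Player II). -/
def WinsGameQSI (S : Type u) (T : Set (List S)) (A : Set (ℕ → S)) : Prop :=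
  IsQStratI S T ∧ ∀ f : ℕ → S, PlayThrough S T f → f ∉ A

/-- The play `f` follows the strategy `s` for Player I (who moves at even rounds). -/
def StratFollowsI (S : Type u) (s : List S → S) (f : ℕ → S) : Prop :=
  ∀ n : ℕ, Even n → f n = s (List.ofFn fun i : Fin n => f i)

/-- The play `f` follows the strategy `s` for Player II (who moves at odd rounds). -/
def StratFollowsII (S : Type u) (s : List S → S) (f : ℕ → S) : Prop :=
  ∀ n : ℕ, ¬ Even n → f n = s (List.ofFn fun i : Fin n => f i)

/-- `AD_ℝ`: every length-ω two-player game with moves from `ℝ` is determined. -/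
def ADReal : Prop :=
  ∀ A : Set (ℕ → ℝ),
    (∃ s : List ℝ → ℝ, ∀ f : ℕ → ℝ, StratFollowsI ℝ s f → f ∉ A) ∨
    (∃ s : List ℝ → ℝ, ∀ f : ℕ → ℝ, StratFollowsII ℝ s f → f ∈ A)

/-!
From a winning quasi-strategy `T` for II one gets a club: the nonempty countable sets that contain
an answer of `T` to every position of `T` built from their own elements. Such sets are closed under
increasing unions (a position is finite), every countable set lies in one (close it under a
choice of answers, `ω` steps), and each of them is the set of moves of a play by `T`, in which I
enumerates it and II answers inside it. Conversely, given a club `C`, II builds along the play an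
increasing chain of members of `C`, each absorbing the moves played so far, and uses her moves to
enumerate all of them; the play then collects exactly the union of the chain, which lies in `C`.
-/

section Lists

variable {α : Type*}

lemma exists_forall_mem_of_monotone {Y : ℕ → Set α} (hY : Monotone Y) {p : List α}
    (hp : ∀ a ∈ p, a ∈ ⋃ n, Y n) : ∃ n, ∀ a ∈ p, a ∈ Y n := by
  classical
  have hsub : (p.toFinset : Set α) ⊆ ⋃ n, Y n := fun a ha => hp a (by simpa using ha)
  obtain ⟨n, hn⟩ := hY.directed_le.exists_mem_subset_of_finset_subset_biUnion hsub
  exact ⟨n, fun a ha => hn (by simpa using ha)⟩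

lemma Set.Countable.setOf_list_forall_mem {τ : Set α} (hτ : τ.Countable) :
    {p : List α | ∀ a ∈ p, a ∈ τ}.Countable := by
  have : Countable τ := hτ.to_subtype
  refine (countable_range fun l : List τ => l.map Subtype.val).mono fun p hp => ?_
  exact ⟨p.attach.map fun x => ⟨x.1, hp x.1 x.2⟩, by simp⟩

/-- The closure of `σ` under `r` is reached in `ω` steps, each adding the countably many values
of `r` on lists from the previous stage. -/
lemma Set.Countable.exists_superset_closed_list {σ : Set α} (hσ : σ.Countable)
    (r : List α → α) :
    ∃ τ, σ ⊆ τ ∧ τ.Countable ∧ ∀ p : List α, (∀ a ∈ p, a ∈ τ) → r p ∈ τ := by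
  set F : Set α → Set α := fun τ => τ ∪ r '' {p | ∀ a ∈ p, a ∈ τ}
  have hstep : ∀ n, F^[n] σ ⊆ F^[n + 1] σ := fun n => by
    rw [Function.iterate_succ_apply']; exact subset_union_left
  have hcount : ∀ n, (F^[n] σ).Countable := fun n => by
    induction n with
    | zero => exact hσ
    | succ n ih =>
      rw [Function.iterate_succ_apply']
      exact ih.union (ih.setOf_list_forall_mem.image r)
  refine ⟨⋃ n, F^[n] σ, subset_iUnion (fun n => F^[n] σ) 0, countable_iUnion hcount,
    fun p hp => ?_⟩
  obtain ⟨n, hn⟩ := exists_forall_mem_of_monotone (monotone_nat_of_le_succ hstep) hp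
  refine mem_iUnion.2 ⟨n + 1, ?_⟩
  rw [Function.iterate_succ_apply']
  exact Or.inr ⟨p, hn, rfl⟩

lemma ofFn_succ_eq_append (f : ℕ → α) (n : ℕ) :
    (List.ofFn fun i : Fin (n + 1) => f i) = (List.ofFn fun i : Fin n => f i) ++ [f n] := by
  rw [List.ofFn_succ_last]; rfl

end Lists

namespace ClubGame

variable {S : Type u}

def positionBy (m : List S → S) : ℕ → List S
  | 0 => []
  | n + 1 => positionBy m n ++ [m (positionBy m n)]

lemma positionBy_eq_ofFn (m : List S → S) (n : ℕ) :
    positionBy m n = List.ofFn fun i : Fin n => m (positionBy m i) := by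
  induction n with
  | zero => rfl
  | succ n ih => rw [ofFn_succ_eq_append (fun i => m (positionBy m i)), ← ih]; rfl

lemma length_positionBy (m : List S → S) (n : ℕ) : (positionBy m n).length = n := by
  rw [positionBy_eq_ofFn, List.length_ofFn]

def ClosedUnderResponses (T : Set (List S)) (σ : Set S) : Prop :=
  ∀ p ∈ T, (∀ a ∈ p, a ∈ σ) → ¬ Even p.length → ∃ b ∈ σ, p ++ [b] ∈ T

lemma ClosedUnderResponses.iUnion {T : Set (List S)} {Y : ℕ → Set S} (hY : Monotone Y)
    (h : ∀ n, ClosedUnderResponses T (Y n)) : ClosedUnderResponses T (⋃ n, Y n) := by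
  intro p hp hpY hodd
  obtain ⟨n, hn⟩ := exists_forall_mem_of_monotone hY hpY
  obtain ⟨b, hb, hbT⟩ := h n p hp hn hodd
  exact ⟨b, mem_iUnion.2 ⟨n, hb⟩, hbT⟩

lemma exists_closedUnderResponses_superset [Nonempty S] {T : Set (List S)}
    (hT : IsQStratII S T) {σ : Set S} (hσ : σ.Countable) :
    ∃ τ, σ ⊆ τ ∧ τ.Countable ∧ ClosedUnderResponses T τ := by
  have : ∀ p : List S, ∃ b, (∃ b', p ++ [b'] ∈ T) → p ++ [b] ∈ T := fun p => by
    by_cases h : ∃ b', p ++ [b'] ∈ T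
    · obtain ⟨b, hb⟩ := h; exact ⟨b, fun _ => hb⟩
    · exact ⟨Classical.arbitrary S, fun h' => absurd h' h⟩
  choose r hr using this
  obtain ⟨τ, hστ, hτ, hrτ⟩ := hσ.exists_superset_closed_list r
  exact ⟨τ, hστ, hτ, fun p hp hpτ hodd => ⟨r p, hrτ p hpτ, hr p (hT.2.2 p hp hodd)⟩⟩

/-- I enumerates `σ` on the even moves while II answers inside `σ`; the play then consists
exactly of the elements of `σ`. -/
lemma exists_playThrough_range_eq {T : Set (List S)} (hT : IsQStratII S T) {σ : Set S}
    (hne : σ.Nonempty) (hσ : σ.Countable) (hcl : ClosedUnderResponses T σ) :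
    ∃ f : ℕ → S, PlayThrough S T f ∧ range f = σ := by
  obtain ⟨x₀, hx₀⟩ := hne
  have : ∀ p : List S, ∃ b ∈ σ,
      p ∈ T → (∀ a ∈ p, a ∈ σ) → ¬ Even p.length → p ++ [b] ∈ T := fun p => by
    by_cases h : p ∈ T ∧ (∀ a ∈ p, a ∈ σ) ∧ ¬ Even p.length
    · obtain ⟨b, hb, hbT⟩ := hcl p h.1 h.2.1 h.2.2; exact ⟨b, hb, fun _ _ _ => hbT⟩
    · exact ⟨x₀, hx₀, fun h₁ h₂ h₃ => absurd ⟨h₁, h₂, h₃⟩ h⟩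
  choose r hrσ hrT using this
  set e := enumerateCountable hσ x₀
  set m : List S → S := fun p => if Even p.length then e (p.length / 2) else r p
  have hmσ : ∀ p, m p ∈ σ := fun p => by
    by_cases h : Even p.length
    · simp only [m, if_pos h]
      exact (range_enumerateCountable_of_mem hσ hx₀).subset (mem_range_self _)
    · simp only [m, if_neg h]; exact hrσ p
  set f : ℕ → S := fun n => m (positionBy m n)
  have hpos : ∀ n, positionBy m n ∈ T := fun n => by
    induction n with
    | zero => exact hT.1
    | succ n ih =>
      change positionBy m n ++ [m (positionBy m n)] ∈ T
      by_cases h : Even (positionBy m n).length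
      · exact hT.2.1 _ ih h _
      · have hin : ∀ a ∈ positionBy m n, a ∈ σ := fun a ha => by
          rw [positionBy_eq_ofFn, List.mem_ofFn'] at ha
          obtain ⟨i, rfl⟩ := ha; exact hmσ _
        have hm : m (positionBy m n) = r (positionBy m n) := if_neg h
        rw [hm]; exact hrT _ ih hin h
  refine ⟨f, fun n => positionBy_eq_ofFn m n ▸ hpos n, ?_⟩
  refine (range_subset_iff.2 fun n => hmσ _).antisymm ?_
  rw [← range_enumerateCountable_of_mem hσ hx₀]
  rintro _ ⟨k, rfl⟩
  refine ⟨2 * k, ?_⟩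
  have hlen := length_positionBy m (2 * k)
  simp only [m, hlen, even_two_mul, if_true]
  congr 1; omega

def responseClosedSets (T : Set (List S)) : Set (Cw S) :=
  {σ | σ.1.Nonempty ∧ ClosedUnderResponses T σ.1}

def IsClub (C : Set (Cw S)) : Prop :=
  (∀ σ : Cw S, ∃ τ ∈ C, σ.1 ⊆ τ.1) ∧
    ∀ g : ℕ → Cw S, (∀ n, g n ∈ C) → (∀ n, (g n).1 ⊆ (g (n + 1)).1) →
      (⟨⋃ n, (g n).1, Set.countable_iUnion fun n => (g n).2⟩ : Cw S) ∈ C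

lemma isClub_responseClosedSets [Nonempty S] {T : Set (List S)} (hT : IsQStratII S T) :
    IsClub (responseClosedSets T) := by
  refine ⟨fun σ => ?_, fun g hg hmono => ?_⟩
  · obtain ⟨τ, hστ, hτ, hcl⟩ :=
      exists_closedUnderResponses_superset hT (σ.2.insert (Classical.arbitrary S))
    exact ⟨⟨τ, hτ⟩, ⟨⟨_, hστ (mem_insert _ _)⟩, hcl⟩, (subset_insert _ _).trans hστ⟩
  · obtain ⟨x, hx⟩ := (hg 0).1
    exact ⟨⟨x, mem_iUnion.2 ⟨0, hx⟩⟩,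
      ClosedUnderResponses.iUnion (monotone_nat_of_le_succ hmono) fun n => (hg n).2⟩

lemma responseClosedSets_subset {T : Set (List S)} {A : Set (Cw S)} (hwin : WinsClubII S T A) :
    responseClosedSets T ⊆ A := by
  intro σ ⟨hne, hcl⟩
  obtain ⟨f, hf, hrange⟩ := exists_playThrough_range_eq hwin.1 hne σ.2 hcl
  have hσ : playSet S f = σ := Subtype.ext hrange
  exact hσ ▸ hwin.2 f hf

def strategyTree (s : List S → S) : Set (List S) :=
  {p | ∀ i, (h : i < p.length) → ¬ Even i → p[i] = s (p.take i)}

lemma append_mem_strategyTree {s : List S → S} {p : List S} (hp : p ∈ strategyTree s) {a : S}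
    (ha : ¬ Even p.length → a = s p) : p ++ [a] ∈ strategyTree s := by
  intro i hi hodd
  rcases Nat.lt_succ_iff_lt_or_eq.1 (by simpa using hi) with hlt | rfl
  · rw [List.getElem_append_left hlt, List.take_append_of_le_length hlt.le]
    exact hp i hlt hodd
  · simpa using ha hodd

lemma isQStratII_strategyTree (s : List S → S) : IsQStratII S (strategyTree s) :=
  ⟨fun i h => absurd h (Nat.not_lt_zero i),
    fun _ hp he _ => append_mem_strategyTree hp fun ho => absurd he ho,
    fun _ hp _ => ⟨_, append_mem_strategyTree hp fun _ => rfl⟩⟩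

lemma stratFollowsII_of_playThrough {s : List S → S} {f : ℕ → S}
    (hf : PlayThrough S (strategyTree s) f) : StratFollowsII S s f := by
  intro n hodd
  have htake :
      (List.ofFn fun i : Fin (n + 1) => f i).take n = List.ofFn fun i : Fin n => f i := by
    rw [ofFn_succ_eq_append, List.take_left' (by simp)]
  have h := hf (n + 1) n (by simp) hodd
  rw [List.getElem_ofFn] at h
  exact h.trans (congrArg s htake)

def clubChain (c : Cw S → Cw S) (x₀ : S) (f : ℕ → S) : ℕ → Cw S
  | 0 => c ⟨{x₀}, countable_singleton x₀⟩
  | n + 1 => c ⟨(clubChain c x₀ f n).1 ∪ f '' Iio (2 * (n + 1)),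
      (clubChain c x₀ f n).2.union ((finite_Iio _).image f).countable⟩

section clubChain

variable {c : Cw S → Cw S} {x₀ : S} {f : ℕ → S}

lemma clubChain_subset_succ (hc : ∀ σ, σ.1 ⊆ (c σ).1) (n : ℕ) :
    (clubChain c x₀ f n).1 ⊆ (clubChain c x₀ f (n + 1)).1 :=
  fun _ hx => hc _ (Or.inl hx)

lemma mem_clubChain_of_lt (hc : ∀ σ, σ.1 ⊆ (c σ).1) {i n : ℕ} (h : i < 2 * n) :
    f i ∈ (clubChain c x₀ f n).1 := by
  cases n with
  | zero => omega
  | succ n => exact hc _ (Or.inr ⟨i, h, rfl⟩)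

lemma base_mem_clubChain (hc : ∀ σ, σ.1 ⊆ (c σ).1) (n : ℕ) :
    x₀ ∈ (clubChain c x₀ f n).1 := by
  induction n with
  | zero => exact hc _ rfl
  | succ n ih => exact clubChain_subset_succ hc n ih

lemma clubChain_congr {g : ℕ → S} {n : ℕ} (h : ∀ i < 2 * n, f i = g i) :
    clubChain c x₀ f n = clubChain c x₀ g n := by
  induction n with
  | zero => rfl
  | succ n ih =>
    simp only [clubChain, ih fun i hi => h i (by omega)]
    congr 3
    exact image_congr fun i hi => h i hi

end clubChain

/-- At a position of length `2 ⟨i, j⟩ + 1`, II plays the `j`-th element of the `i`-th set of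
the chain, which only depends on the first `2 i` moves. -/
noncomputable def clubStrategy (c : Cw S → Cw S) (x₀ : S) (p : List S) : S :=
  let k := Nat.unpair (p.length / 2)
  enumerateCountable (clubChain c x₀ (fun t => p.getD t x₀) k.1).2 x₀ k.2

lemma range_eq_iUnion_clubChain {c : Cw S → Cw S} (hc : ∀ σ, σ.1 ⊆ (c σ).1) {x₀ : S}
    {f : ℕ → S} (hf : StratFollowsII S (clubStrategy c x₀) f) :
    range f = ⋃ n, (clubChain c x₀ f n).1 := by
  refine (range_subset_iff.2 fun m => mem_iUnion.2
    ⟨m + 1, mem_clubChain_of_lt hc (by omega)⟩).antisymm (iUnion_subset fun i => ?_)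
  rw [← range_enumerateCountable_of_mem (clubChain c x₀ f i).2 (base_mem_clubChain hc i)]
  rintro _ ⟨j, rfl⟩
  refine ⟨2 * Nat.pair i j + 1, ?_⟩
  have hi : i ≤ Nat.pair i j := Nat.left_le_pair i j
  have hk : (2 * Nat.pair i j + 1) / 2 = Nat.pair i j := by omega
  rw [hf _ (by simp [parity_simps]), clubStrategy]
  simp only [List.length_ofFn, hk, Nat.unpair_pair]
  congr 2
  refine clubChain_congr fun t ht => ?_
  rw [List.getD_eq_getElem _ _ (by simp; omega), List.getElem_ofFn]

lemma mem_qclub_of_isClub [Nonempty S] {C A : Set (Cw S)} (hC : IsClub C) (hCA : C ⊆ A) :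
    A ∈ qclub S := by
  choose c hcC hc using hC.1
  set x₀ := Classical.arbitrary S
  refine ⟨strategyTree (clubStrategy c x₀), isQStratII_strategyTree _, fun f hf => hCA ?_⟩
  have hmem : ∀ n, clubChain c x₀ f n ∈ C := fun n => by cases n <;> exact hcC _
  have hσ : playSet S f =
      ⟨⋃ n, (clubChain c x₀ f n).1, countable_iUnion fun n => (clubChain c x₀ f n).2⟩ :=
    Subtype.ext (range_eq_iUnion_clubChain hc (stratFollowsII_of_playThrough hf))
  exact hσ ▸ hC.2 _ hmem (clubChain_subset_succ hc)

end ClubGame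

open ClubGame in
/-- under AC, the quasi-club filter is the club filter on `[S]^ω`. -/
theorem qclub_eq_club_filter (S : Type u) [Infinite S] :
    ∀ A : Set (Cw S),
      A ∈ qclub S ↔
        ∃ C : Set (Cw S), C ⊆ A ∧
          (∀ σ : Cw S, ∃ τ ∈ C, σ.1 ⊆ τ.1) ∧
          (∀ g : ℕ → Cw S, (∀ n, g n ∈ C) → (∀ n, (g n).1 ⊆ (g (n + 1)).1) →
            (⟨⋃ n, (g n).1, Set.countable_iUnion fun n => (g n).2⟩ : Cw S) ∈ C) :=
  fun _ => ⟨fun ⟨T, hwin⟩ => ⟨responseClosedSets T, responseClosedSets_subset hwin,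
      isClub_responseClosedSets hwin.1⟩,
    fun ⟨_, hCA, hC⟩ => mem_qclub_of_isClub hC hCA⟩
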